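/- Let a > 0, D₁ > 0, τ > 0. The partial derivative of ĥ(r,τ) with respect to r equals (a/√(4·π·D₁·τ³))·exp(−(r−a)²/(4·D₁·τ))·( a/r² − ((r−a)/(2·D₁·τ))·(1 − a/r) ) for all r > 0, and there exists a unique r* > a at which this derivative vanishes on (a,∞); moreover r ↦ ĥ(r,τ) is strictly increasing on (a, r*) and strictly decreasing on (r*, ∞), so h* = ĥ(r*,τ) is the maximum value of ĥ(·,τ) on (a,∞). -/

import Mathlib

open MeasureTheory Real

/-- The channel impulse response at distance `r` and elapsed time `τ`. -/
noncomputable def hCIR (a D₁ τ r : ℝ) : ℝ :=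
  a / Real.sqrt (4 * π * D₁ * τ ^ 3) * (1 - a / r) * Real.exp (-(r - a) ^ 2 / (4 * D₁ * τ))

/-- The partial derivative of the channel impulse response with respect to the distance. -/
noncomputable def hCIRderiv (a D₁ τ r : ℝ) : ℝ :=
  a / Real.sqrt (4 * π * D₁ * τ ^ 3) * Real.exp (-(r - a) ^ 2 / (4 * D₁ * τ))
    * (a / r ^ 2 - (r - a) / (2 * D₁ * τ) * (1 - a / r))

/-!
The derivative is a positive factor times `2 a D₁ τ - r (r - a)²`. On `[a, ∞)` the cubic
`r (r - a)²` increases strictly from `0` to `∞`, so it meets the constant `2 a D₁ τ` at exactly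
one `r* > a`; the derivative is positive on `(a, r*)` and negative on `(r*, ∞)`.
-/

open Set

section Calculus

variable {f f' : ℝ → ℝ} {a c : ℝ}

lemma strictMonoOn_Ioc_of_hasDerivAt_pos (hf : ∀ x ∈ Ioc a c, HasDerivAt f (f' x) x)
    (hf' : ∀ x ∈ Ioo a c, 0 < f' x) : StrictMonoOn f (Ioc a c) := by
  refine strictMonoOn_of_hasDerivWithinAt_pos (f' := f') (convex_Ioc a c)
    (fun x hx => (hf x hx).continuousAt.continuousWithinAt) (fun x hx => ?_) ?_
  · rw [interior_Ioc] at hx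
    exact (hf x (Ioo_subset_Ioc_self hx)).hasDerivWithinAt
  · simpa only [interior_Ioc] using hf'

lemma strictAntiOn_Ici_of_hasDerivAt_neg (hf : ∀ x ∈ Ici c, HasDerivAt f (f' x) x)
    (hf' : ∀ x ∈ Ioi c, f' x < 0) : StrictAntiOn f (Ici c) := by
  refine strictAntiOn_of_hasDerivWithinAt_neg (f' := f') (convex_Ici c)
    (fun x hx => (hf x hx).continuousAt.continuousWithinAt) (fun x hx => ?_) ?_
  · rw [interior_Ici] at hx
    exact (hf x (Ioi_subset_Ici_self hx)).hasDerivWithinAt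
  · simpa only [interior_Ici] using hf'

lemma MonotoneOn.isMaxOn_Ioi_of_antitoneOn_Ici (hmono : MonotoneOn f (Ioc a c))
    (hanti : AntitoneOn f (Ici c)) (hac : a < c) : IsMaxOn f (Ioi a) c := by
  intro x (hx : a < x)
  rcases le_total x c with hxc | hcx
  · exact hmono ⟨hx, hxc⟩ ⟨hac, le_rfl⟩ hxc
  · exact hanti self_mem_Ici hcx hcx

end Calculus

lemma strictMonoOn_mul_sub_sq {a : ℝ} (ha : 0 ≤ a) :
    StrictMonoOn (fun r => r * (r - a) ^ 2) (Ici a) := by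
  intro x (hx : a ≤ x) y (hy : a ≤ y) hxy
  nlinarith [mul_nonneg (sub_pos.2 hxy).le (sq_nonneg (x - a)),
    mul_pos (mul_pos (ha.trans_lt (hx.trans_lt hxy)) (sub_pos.2 hxy))
      (by linarith : 0 < x + y - 2 * a)]

lemma exists_gt_mul_sub_sq_eq {a k : ℝ} (ha : 0 ≤ a) (hk : 0 < k) :
    ∃ r, a < r ∧ r * (r - a) ^ 2 = k := by
  -- at `r = a + m` with `m = max 1 k` the cubic is `(a + m) m² ≥ m³ ≥ k`
  have hb : a ≤ a + max 1 k := le_add_of_nonneg_right (by positivity)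
  obtain ⟨r, ⟨har, -⟩, hr⟩ : ∃ r ∈ Icc a (a + max 1 k), r * (r - a) ^ 2 = k := by
    refine intermediate_value_Icc hb (by fun_prop) ⟨by simpa using hk.le, ?_⟩
    have h1 : 1 ≤ max 1 k := le_max_left 1 k
    have hk' : k ≤ max 1 k := le_max_right 1 k
    simp only [add_sub_cancel_left]
    nlinarith
  refine ⟨r, har.lt_of_ne ?_, hr⟩
  rintro rfl
  simp [hk.ne] at hr

section CIR

variable {a D₁ τ r : ℝ}

lemma hasDerivAt_hCIR (hr : r ≠ 0) :
    HasDerivAt (hCIR a D₁ τ) (hCIRderiv a D₁ τ r) r := by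
  have hexp : HasDerivAt (fun x => exp (-(x - a) ^ 2 / (4 * D₁ * τ)))
      (exp (-(r - a) ^ 2 / (4 * D₁ * τ)) * (-(2 * (r - a)) / (4 * D₁ * τ))) r := by
    have := ((((hasDerivAt_id r).sub_const a).pow 2).neg.div_const (4 * D₁ * τ)).exp
    simpa using this
  have hquot : HasDerivAt (fun x => 1 - a / x) (a / r ^ 2) r := by
    simpa [div_eq_mul_inv, neg_div] using ((hasDerivAt_inv hr).const_mul a).const_sub 1
  refine ((hquot.const_mul (a / sqrt (4 * π * D₁ * τ ^ 3))).mul hexp).congr_deriv ?_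
  rw [hCIRderiv]
  ring

lemma hCIRderiv_eq_mul (hD₁ : D₁ ≠ 0) (hτ : τ ≠ 0) (hr : r ≠ 0) :
    hCIRderiv a D₁ τ r = a / sqrt (4 * π * D₁ * τ ^ 3) * exp (-(r - a) ^ 2 / (4 * D₁ * τ))
      / (2 * D₁ * τ * r ^ 2) * (2 * a * D₁ * τ - r * (r - a) ^ 2) := by
  rw [hCIRderiv]
  field_simp

lemma hCIRderiv_factor_pos (ha : 0 < a) (hD₁ : 0 < D₁) (hτ : 0 < τ) (hr : 0 < r) :
    0 < a / sqrt (4 * π * D₁ * τ ^ 3) * exp (-(r - a) ^ 2 / (4 * D₁ * τ))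
      / (2 * D₁ * τ * r ^ 2) := by
  have : 0 < sqrt (4 * π * D₁ * τ ^ 3) := sqrt_pos.2 (by positivity)
  positivity

lemma hCIRderiv_pos_of_lt (ha : 0 < a) (hD₁ : 0 < D₁) (hτ : 0 < τ) (hr : 0 < r)
    (h : r * (r - a) ^ 2 < 2 * a * D₁ * τ) : 0 < hCIRderiv a D₁ τ r := by
  rw [hCIRderiv_eq_mul hD₁.ne' hτ.ne' hr.ne']
  exact mul_pos (hCIRderiv_factor_pos ha hD₁ hτ hr) (sub_pos.2 h)

lemma hCIRderiv_neg_of_gt (ha : 0 < a) (hD₁ : 0 < D₁) (hτ : 0 < τ) (hr : 0 < r)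
    (h : 2 * a * D₁ * τ < r * (r - a) ^ 2) : hCIRderiv a D₁ τ r < 0 := by
  rw [hCIRderiv_eq_mul hD₁.ne' hτ.ne' hr.ne']
  exact mul_neg_of_pos_of_neg (hCIRderiv_factor_pos ha hD₁ hτ hr) (sub_neg.2 h)

lemma hCIRderiv_eq_zero_iff (ha : 0 < a) (hD₁ : 0 < D₁) (hτ : 0 < τ) (hr : 0 < r) :
    hCIRderiv a D₁ τ r = 0 ↔ r * (r - a) ^ 2 = 2 * a * D₁ * τ := by
  rw [hCIRderiv_eq_mul hD₁.ne' hτ.ne' hr.ne',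
    mul_eq_zero_iff_left (hCIRderiv_factor_pos ha hD₁ hτ hr).ne', sub_eq_zero, eq_comm]

end CIR

/-- The CIR, as a function of the distance, has the stated derivative, a unique critical
point `r* > a`, is strictly increasing before it and strictly decreasing after it, and
attains its maximum over `(a, ∞)` there. -/
theorem CIR_deriv_and_unique_max (a D₁ τ : ℝ) (ha : 0 < a) (hD₁ : 0 < D₁) (hτ : 0 < τ) :
    (∀ r : ℝ, 0 < r → HasDerivAt (fun x => hCIR a D₁ τ x) (hCIRderiv a D₁ τ r) r) ∧
    ∃ rstar : ℝ, a < rstar ∧ hCIRderiv a D₁ τ rstar = 0 ∧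
      (∀ r : ℝ, a < r → hCIRderiv a D₁ τ r = 0 → r = rstar) ∧
      StrictMonoOn (hCIR a D₁ τ) (Set.Ioc a rstar) ∧
      StrictAntiOn (hCIR a D₁ τ) (Set.Ici rstar) ∧
      ∀ r ∈ Set.Ioi a, hCIR a D₁ τ r ≤ hCIR a D₁ τ rstar := by
  have hderiv (r : ℝ) (hr : 0 < r) : HasDerivAt (hCIR a D₁ τ) (hCIRderiv a D₁ τ r) r :=
    hasDerivAt_hCIR hr.ne'
  obtain ⟨rstar, har, hroot⟩ := exists_gt_mul_sub_sq_eq ha.le (by positivity : 0 < 2 * a * D₁ * τ)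
  have hcubic := strictMonoOn_mul_sub_sq ha.le
  have hmono : StrictMonoOn (hCIR a D₁ τ) (Ioc a rstar) :=
    strictMonoOn_Ioc_of_hasDerivAt_pos (fun x hx => hderiv x (ha.trans hx.1)) fun x hx =>
      hCIRderiv_pos_of_lt ha hD₁ hτ (ha.trans hx.1) <|
        hroot ▸ hcubic hx.1.le har.le hx.2
  have hanti : StrictAntiOn (hCIR a D₁ τ) (Ici rstar) :=
    strictAntiOn_Ici_of_hasDerivAt_neg (fun x hx => hderiv x (ha.trans (har.trans_le hx)))
      fun x hx => hCIRderiv_neg_of_gt ha hD₁ hτ (ha.trans (har.trans hx)) <|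
        hroot ▸ hcubic har.le (har.trans hx).le hx
  refine ⟨hderiv, rstar, har, (hCIRderiv_eq_zero_iff ha hD₁ hτ (ha.trans har)).2 hroot,
    fun r hr h0 => ?_, hmono, hanti,
    hmono.monotoneOn.isMaxOn_Ioi_of_antitoneOn_Ici hanti.antitoneOn har⟩
  exact hcubic.injOn hr.le har.le
    (((hCIRderiv_eq_zero_iff ha hD₁ hτ (ha.trans hr)).1 h0).trans hroot.symm)
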